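/- Fix an integer R ≥ 2, an integer M ≥ 2, a real a ∈ (0,1), and positive reals q₁,…,q_R with q₁ + ⋯ + q_R = 1 such that the nodes x_r := M^{−(r−2)} (q₁/q_r)^a, r = 2,…,R, are pairwise distinct. Let (W₁,…,W_R) be the unique solution of the weight system. Then the coefficient W̃_{R+1} := W₁ q₁^{−aR} + (M^{−R} − 1) ∑_{r=2}^R W_r M^{−(r−2)R} q_r^{−aR} satisfies W̃_{R+1} = (1 − M^{−R}) q₁^{−aR} ∑_{k=0}^∞ M^{−kR} ∏_{r=0}^{R−2} (1 − M^{k−r}(q₁/q_{r+2})^a). -/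

import Mathlib

/-!
Write `x_r = M^{-(r-2)} (q₁/q_r)^a`, `ρ = M⁻¹`, `S_m = ∑_r W_r x_r^m` and
`p = ∏_r (X - x_r)`, a monic polynomial of degree `d = R - 1`. Dividing the weight system by
`q₁^{-a(ℓ-1)}` turns it into `(1 - ρ^m) S_m = 1` for `1 ≤ m ≤ d`, and the coefficient to compute
becomes `q₁^{-aR} (1 - (1 - ρ^R) S_R)`.

On the other side, the `k`-th term of the series is `ρ^k p(ρ^k) = ∑_j p_j (ρ^{j+1})^k`, so the
series sums to `∑_j p_j / (1 - ρ^{j+1})`. The terms `j < d` equal `p_j S_{j+1}`, while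
`∑_{j ≤ d} p_j S_{j+1} = ∑_r W_r x_r p(x_r) = 0` because every node is a root of `p`; as `p_d = 1`,
the series equals `(1 - ρ^R)⁻¹ - S_R`.
-/

open Finset Polynomial

section PowerSums

variable {K ι : Type*}

theorem sum_coeff_mul_sum_mul_pow_add_eq_zero [CommRing K] [Nontrivial K] (s : Finset ι)
    (x W : ι → K) (n : ℕ) :
    ∑ j ∈ range (#s + 1),
      (∏ i ∈ s, (X - C (x i))).coeff j * ∑ i ∈ s, W i * x i ^ (n + j) = 0 := by
  simp_rw [mul_sum]
  rw [sum_comm]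
  refine sum_eq_zero fun i hi => ?_
  have hroot : (∏ i ∈ s, (X - C (x i))).eval (x i) = 0 := by
    rw [eval_prod]
    exact prod_eq_zero hi (by simp)
  rw [eval_eq_sum_range, natDegree_finsetProd_X_sub_C_eq_card] at hroot
  calc _ = W i * x i ^ n * ∑ j ∈ range (#s + 1), (∏ i ∈ s, (X - C (x i))).coeff j * x i ^ j := by
        rw [mul_sum]
        exact sum_congr rfl fun j _ => by ring
    _ = 0 := by rw [hroot, mul_zero]

theorem sum_coeff_div_one_sub_pow [Field K] (s : Finset ι) (x W : ι → K) (ρ : K)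
    (hS : ∀ m ∈ Icc 1 #s, (1 - ρ ^ m) * ∑ i ∈ s, W i * x i ^ m = 1) :
    ∑ j ∈ range (#s + 1), (∏ i ∈ s, (X - C (x i))).coeff j / (1 - ρ ^ (j + 1)) =
      (1 - ρ ^ (#s + 1))⁻¹ - ∑ i ∈ s, W i * x i ^ (#s + 1) := by
  have hlead : (∏ i ∈ s, (X - C (x i))).coeff #s = 1 := by
    simpa using (monic_prod_X_sub_C x s).coeff_natDegree
  have hvanish := sum_coeff_mul_sum_mul_pow_add_eq_zero s x W 1
  rw [sum_range_succ, hlead, one_mul, add_comm 1] at hvanish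
  have hlow : ∀ j ∈ range #s, (∏ i ∈ s, (X - C (x i))).coeff j / (1 - ρ ^ (j + 1)) =
      (∏ i ∈ s, (X - C (x i))).coeff j * ∑ i ∈ s, W i * x i ^ (1 + j) := by
    intro j hj
    rw [div_eq_mul_inv, add_comm 1 j,
      ← eq_inv_of_mul_eq_one_right (hS (j + 1) (by simp at hj ⊢; omega))]
  rw [sum_range_succ, hlead, one_div, sum_congr rfl hlow]
  linear_combination hvanish

theorem prod_one_sub_inv_mul_eq_inv_pow_mul_eval [Field K] (s : Finset ι) (x : ι → K) {y : K}
    (hy : y ≠ 0) :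
    ∏ i ∈ s, (1 - y⁻¹ * x i) = y⁻¹ ^ #s * (∏ i ∈ s, (X - C (x i))).eval y := by
  rw [eval_prod, ← prod_const, ← prod_mul_distrib]
  refine prod_congr rfl fun i _ => ?_
  simp only [eval_sub, eval_X, eval_C]
  field_simp

end PowerSums

theorem hasSum_pow_mul_eval_pow {K : Type*} [NormedField K] (p : K[X]) {ρ : K} (hρ : ‖ρ‖ < 1) :
    HasSum (fun k : ℕ => ρ ^ k * p.eval (ρ ^ k))
      (∑ j ∈ range (p.natDegree + 1), p.coeff j / (1 - ρ ^ (j + 1))) := by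
  have hterm : ∀ k : ℕ, ρ ^ k * p.eval (ρ ^ k) =
      ∑ j ∈ range (p.natDegree + 1), p.coeff j * (ρ ^ (j + 1)) ^ k := by
    intro k
    rw [eval_eq_sum_range, mul_sum]
    exact sum_congr rfl fun j _ => by ring
  simp_rw [hterm, div_eq_mul_inv]
  refine hasSum_sum fun j _ => ?_
  have hlt : ‖ρ ^ (j + 1)‖ < 1 := by
    rw [norm_pow]
    exact pow_lt_one₀ (norm_nonneg ρ) hρ (Nat.succ_ne_zero j)
  exact (hasSum_geometric_of_norm_lt_one hlt).mul_left (p.coeff j)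

theorem rpow_neg_natCast_eq_inv_pow (x : ℝ) (n : ℕ) : x ^ (-(n : ℝ)) = x⁻¹ ^ n := by
  rw [Real.rpow_neg_natCast, zpow_neg, zpow_natCast, inv_pow]

theorem prod_range_sub_one_add_two_eq_prod_Icc {M : Type*} [CommMonoid M] (f : ℕ → M) (R : ℕ) :
    ∏ r ∈ range (R - 1), f (r + 2) = ∏ r ∈ Icc 2 R, f r := by
  rw [← Ico_add_one_right_eq_Icc, prod_Ico_eq_prod_range, show R + 1 - 2 = R - 1 by omega]
  simp only [add_comm 2]

noncomputable def weightNode (M : ℕ) (a : ℝ) (q : ℕ → ℝ) (r : ℕ) : ℝ :=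
  (M : ℝ) ^ (-((r : ℝ) - 2)) * (q 1 / q r) ^ a

section WeightSystem

variable {R M : ℕ} {a : ℝ} {q : ℕ → ℝ}

theorem rpow_mul_rpow_eq_weightNode_pow_mul (hq1 : 0 < q 1) {r : ℕ} (hqr : 0 < q r) (m : ℕ) :
    (M : ℝ) ^ (-(((r : ℝ) - 2) * m)) * q r ^ (-(a * m)) =
      weightNode M a q r ^ m * q 1 ^ (-(a * m)) := by
  have hM : (0 : ℝ) ≤ M := M.cast_nonneg
  rw [weightNode, mul_pow, ← Real.rpow_natCast, ← Real.rpow_natCast, ← Real.rpow_mul hM,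
    ← Real.rpow_mul (div_pos hq1 hqr).le, Real.div_rpow hq1.le hqr.le, neg_mul_eq_neg_mul,
    Real.rpow_neg hq1.le, Real.rpow_neg hqr.le]
  field_simp

theorem sum_mul_rpow_eq_sum_mul_weightNode_pow (hq1 : 0 < q 1) (hq : ∀ r ∈ Icc 2 R, 0 < q r)
    (W : ℕ → ℝ) (m : ℕ) :
    ∑ r ∈ Icc 2 R, W r * (M : ℝ) ^ (-(((r : ℝ) - 2) * m)) * q r ^ (-(a * m)) =
      (∑ r ∈ Icc 2 R, W r * weightNode M a q r ^ m) * q 1 ^ (-(a * m)) := by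
  rw [sum_mul]
  refine sum_congr rfl fun r hr => ?_
  rw [mul_assoc, rpow_mul_rpow_eq_weightNode_pow_mul hq1 (hq r hr), mul_assoc]

theorem one_sub_inv_pow_mul_sum_weightNode_pow (hq1 : 0 < q 1) (hq : ∀ r ∈ Icc 2 R, 0 < q r)
    {W : ℕ → ℝ} (hW1 : W 1 = 1)
    (hWsys : ∀ ℓ ∈ Icc 2 R,
      W 1 * q 1 ^ (-(a * ((ℓ : ℝ) - 1))) +
        ((M : ℝ) ^ ((1 : ℝ) - (ℓ : ℝ)) - 1) *
          ∑ r ∈ Icc 2 R, W r * (M : ℝ) ^ (-(((r : ℝ) - 2) * ((ℓ : ℝ) - 1))) *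
            q r ^ (-(a * ((ℓ : ℝ) - 1))) = 0)
    {m : ℕ} (hm : m ∈ Icc 1 (R - 1)) :
    (1 - (M : ℝ)⁻¹ ^ m) * ∑ r ∈ Icc 2 R, W r * weightNode M a q r ^ m = 1 := by
  have h := hWsys (m + 1) (by simp at hm ⊢; omega)
  rw [hW1, show ((m + 1 : ℕ) : ℝ) - 1 = m by push_cast; ring,
    show (1 : ℝ) - ((m + 1 : ℕ) : ℝ) = -(m : ℝ) by push_cast; ring, rpow_neg_natCast_eq_inv_pow,
    sum_mul_rpow_eq_sum_mul_weightNode_pow hq1 hq] at h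
  refine mul_right_cancel₀ (Real.rpow_pos_of_pos hq1 (-(a * m))).ne' ?_
  linear_combination -h

theorem rpow_mul_prod_one_sub_eq_inv_pow_mul_eval (hM : 0 < M) (hR : 1 ≤ R) (k : ℕ) :
    (M : ℝ) ^ (-((k : ℝ) * (R : ℝ))) *
        ∏ r ∈ range (R - 1), (1 - (M : ℝ) ^ ((k : ℝ) - (r : ℝ)) * (q 1 / q (r + 2)) ^ a) =
      (M : ℝ)⁻¹ ^ k * (∏ r ∈ Icc 2 R, (X - C (weightNode M a q r))).eval ((M : ℝ)⁻¹ ^ k) := by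
  have hM0 : (0 : ℝ) < M := by exact_mod_cast hM
  have hfactor : ∀ r : ℕ, (M : ℝ) ^ ((k : ℝ) - (r : ℝ)) * (q 1 / q (r + 2)) ^ a =
      ((M : ℝ)⁻¹ ^ k)⁻¹ * weightNode M a q (r + 2) := fun r => by
    rw [weightNode, inv_pow, inv_inv, sub_eq_add_neg, Real.rpow_add hM0, Real.rpow_natCast]
    push_cast
    ring_nf
  simp_rw [hfactor]
  rw [prod_range_sub_one_add_two_eq_prod_Icc (fun r => 1 - ((M : ℝ)⁻¹ ^ k)⁻¹ * weightNode M a q r),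
    prod_one_sub_inv_mul_eq_inv_pow_mul_eval _ _ (by positivity),
    show -((k : ℝ) * R) = -((k * R : ℕ) : ℝ) by push_cast; ring, rpow_neg_natCast_eq_inv_pow,
    Nat.card_Icc, ← mul_assoc]
  congr 1
  obtain ⟨n, rfl⟩ : ∃ n, R = n + 1 := ⟨R - 1, by omega⟩
  have hρk : ((M : ℝ)⁻¹ ^ k) ^ n ≠ 0 := by positivity
  rw [show n + 1 + 1 - 2 = n by omega, inv_pow _ n, mul_add_one, pow_add, pow_mul,
    mul_right_comm, mul_inv_cancel₀ hρk, one_mul]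

end WeightSystem

theorem stmt_2_general (R M : ℕ) (hR : 2 ≤ R) (hM : 2 ≤ M) (a : ℝ)
    (q : ℕ → ℝ) (hq : ∀ r ∈ Icc 1 R, 0 < q r)
    (W : ℕ → ℝ) (hW1 : W 1 = 1)
    (hWsys : ∀ ℓ ∈ Icc 2 R,
      W 1 * q 1 ^ (-(a * ((ℓ : ℝ) - 1))) +
        ((M : ℝ) ^ ((1 : ℝ) - (ℓ : ℝ)) - 1) *
          ∑ r ∈ Icc 2 R, W r * (M : ℝ) ^ (-(((r : ℝ) - 2) * ((ℓ : ℝ) - 1))) *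
            q r ^ (-(a * ((ℓ : ℝ) - 1))) = 0) :
    W 1 * q 1 ^ (-(a * (R : ℝ))) +
      ((M : ℝ) ^ (-(R : ℝ)) - 1) *
        ∑ r ∈ Icc 2 R, W r * (M : ℝ) ^ (-(((r : ℝ) - 2) * (R : ℝ))) *
          q r ^ (-(a * (R : ℝ)))
    = (1 - (M : ℝ) ^ (-(R : ℝ))) * q 1 ^ (-(a * (R : ℝ))) *
        ∑' k : ℕ, (M : ℝ) ^ (-((k : ℝ) * (R : ℝ))) *
          ∏ r ∈ Finset.range (R - 1),
            (1 - (M : ℝ) ^ ((k : ℝ) - (r : ℝ)) * (q 1 / q (r + 2)) ^ a) := by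
  have hρ0 : (0 : ℝ) < (M : ℝ)⁻¹ := by positivity
  have hρ1 : (M : ℝ)⁻¹ < 1 := inv_lt_one_of_one_lt₀ (by exact_mod_cast hM)
  have hq1 : 0 < q 1 := hq 1 (by simp; omega)
  have hq2 : ∀ r ∈ Icc 2 R, 0 < q r := fun r hr => hq r (by simp at hr ⊢; omega)
  have hS : ∀ m ∈ Icc 1 #(Icc 2 R), (1 - (M : ℝ)⁻¹ ^ m) *
      ∑ r ∈ Icc 2 R, W r * weightNode M a q r ^ m = 1 := fun m hm =>
    one_sub_inv_pow_mul_sum_weightNode_pow hq1 hq2 hW1 hWsys (by simpa using hm)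
  rw [sum_mul_rpow_eq_sum_mul_weightNode_pow hq1 hq2, rpow_neg_natCast_eq_inv_pow,
    tsum_congr (rpow_mul_prod_one_sub_eq_inv_pow_mul_eval (by omega) (by omega)),
    (hasSum_pow_mul_eval_pow _ (by rwa [Real.norm_of_nonneg hρ0.le])).tsum_eq,
    natDegree_finsetProd_X_sub_C_eq_card, sum_coeff_div_one_sub_pow _ _ W _ hS, hW1,
    Nat.card_Icc, show R + 1 - 2 + 1 = R by omega]
  have hρR : 1 - (M : ℝ)⁻¹ ^ R ≠ 0 := (sub_pos.2 (pow_lt_one₀ hρ0.le hρ1 (by omega))).ne'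
  linear_combination (-q 1 ^ (-(a * (R : ℝ)))) * mul_inv_cancel₀ hρR

/-- Closed form of the coefficient `W̃_{R+1}` for any solution of the weight system. -/
theorem stmt_2 (R M : ℕ) (hR : 2 ≤ R) (hM : 2 ≤ M) (a : ℝ) (ha : a ∈ Set.Ioo (0 : ℝ) 1)
    (q : ℕ → ℝ) (hq : ∀ r ∈ Icc 1 R, 0 < q r) (hqsum : ∑ r ∈ Icc 1 R, q r = 1)
    (hnodes : ∀ r ∈ Icc 2 R, ∀ s ∈ Icc 2 R, r ≠ s →
      (M : ℝ) ^ (-((r : ℝ) - 2)) * (q 1 / q r) ^ a ≠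
        (M : ℝ) ^ (-((s : ℝ) - 2)) * (q 1 / q s) ^ a)
    (W : ℕ → ℝ) (hW1 : W 1 = 1)
    (hWsys : ∀ ℓ ∈ Icc 2 R,
      W 1 * q 1 ^ (-(a * ((ℓ : ℝ) - 1))) +
        ((M : ℝ) ^ ((1 : ℝ) - (ℓ : ℝ)) - 1) *
          ∑ r ∈ Icc 2 R, W r * (M : ℝ) ^ (-(((r : ℝ) - 2) * ((ℓ : ℝ) - 1))) *
            q r ^ (-(a * ((ℓ : ℝ) - 1))) = 0) :
    W 1 * q 1 ^ (-(a * (R : ℝ))) +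
      ((M : ℝ) ^ (-(R : ℝ)) - 1) *
        ∑ r ∈ Icc 2 R, W r * (M : ℝ) ^ (-(((r : ℝ) - 2) * (R : ℝ))) *
          q r ^ (-(a * (R : ℝ)))
    = (1 - (M : ℝ) ^ (-(R : ℝ))) * q 1 ^ (-(a * (R : ℝ))) *
        ∑' k : ℕ, (M : ℝ) ^ (-((k : ℝ) * (R : ℝ))) *
          ∏ r ∈ Finset.range (R - 1),
            (1 - (M : ℝ) ^ ((k : ℝ) - (r : ℝ)) * (q 1 / q (r + 2)) ^ a) :=
  stmt_2_general R M hR hM a q hq W hW1 hWsys
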